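/- Suppose the optimal fractional budgeted matching OPT is partitioned as OPT = OPT⁺ ∪ OPT⁻, where OPT⁺ contains the edges with buck-per-bang b(e) > γ_B and OPT⁻ those with b(e) ≤ γ_B, and suppose the budget constraint Σ_{e∈OPT} x(ℓ)c_ℓ ≤ B holds and the Threshold algorithm's matching M satisfies γ_B·u(M) = B (tight budget). Then u(OPT⁺) < u(M). Consequently, combined with u(M) ≥ u(OPT⁻)/2, one gets u(OPT) ≤ 3·u(M). -/

import Mathlib

/-! Every edge of `OPT⁺` has `γ_B · u(e) < c_ℓ`, so weighting by `x(ℓ)` and summing puts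
`γ_B · u(OPT⁺)` strictly below the budget `B = γ_B · u(M)` (strictly even when all weights
vanish, as `B > 0`). Adding `u(OPT⁻) ≤ 2 · u(M)` gives the factor 3. -/

variable {L R : Type*} [DecidableEq L] [DecidableEq R]

open Finset

theorem sum_mul_lt_of_lt_of_sum_mul_le {ι α : Type*} [CommRing α] [LinearOrder α]
    [IsStrictOrderedRing α] {s : Finset ι} {w a b : ι → α} {B : α} (hB : 0 < B)
    (hw : ∀ i ∈ s, 0 ≤ w i) (hab : ∀ i ∈ s, a i < b i) (hsum : ∑ i ∈ s, w i * b i ≤ B) :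
    ∑ i ∈ s, w i * a i < B := by
  by_cases hpos : ∃ i ∈ s, 0 < w i
  · obtain ⟨i, hi, hwi⟩ := hpos
    calc ∑ i ∈ s, w i * a i
        < ∑ i ∈ s, w i * b i :=
          sum_lt_sum (fun j hj => mul_le_mul_of_nonneg_left (hab j hj).le (hw j hj))
            ⟨i, hi, mul_lt_mul_of_pos_left (hab i hi) hwi⟩
      _ ≤ B := hsum
  · push Not at hpos
    have hzero : ∀ i ∈ s, w i = 0 := fun i hi => le_antisymm (hpos i hi) (hw i hi)
    rwa [sum_eq_zero fun i hi => by rw [hzero i hi, zero_mul]]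

theorem opt_split_bound_general (OPTp OPTm : Finset (L × R)) (hdisj : Disjoint OPTp OPTm)
    (u : L × R → ℝ) (c : L → ℝ) (x : L → ℝ)
    (hu : ∀ e ∈ OPTp ∪ OPTm, 0 < u e) (hc : ∀ ℓ : L, 0 ≤ c ℓ)
    (hx0 : ∀ ℓ : L, 0 ≤ x ℓ)
    (B γB uM : ℝ) (hB : 0 < B) (hγ : 0 < γB)
    (hOPTp : ∀ e ∈ OPTp, c e.1 / u e > γB)
    (hbudget : ∑ e ∈ OPTp ∪ OPTm, x e.1 * c e.1 ≤ B)
    (htight : γB * uM = B)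
    (hgreedy : uM ≥ (∑ e ∈ OPTm, x e.1 * u e) / 2) :
    (∑ e ∈ OPTp, x e.1 * u e) < uM ∧
    (∑ e ∈ OPTp ∪ OPTm, x e.1 * u e) ≤ 3 * uM := by
  have hcost : ∀ e ∈ OPTp, γB * u e < c e.1 := fun e he =>
    (lt_div_iff₀ (hu e (mem_union_left _ he))).mp (hOPTp e he)
  have hbudgetp : ∑ e ∈ OPTp, x e.1 * c e.1 ≤ B :=
    (sum_le_sum_of_subset_of_nonneg subset_union_left fun e _ _ =>
      mul_nonneg (hx0 _) (hc _)).trans hbudget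
  have hplus : ∑ e ∈ OPTp, x e.1 * u e < uM := by
    have h := sum_mul_lt_of_lt_of_sum_mul_le hB (fun e _ => hx0 e.1) hcost hbudgetp
    simp_rw [mul_left_comm _ γB, ← mul_sum] at h
    exact lt_of_mul_lt_mul_left (h.trans_eq htight.symm) hγ.le
  refine ⟨hplus, ?_⟩
  rw [sum_union hdisj]
  linarith

/-- Splitting the optimal fractional budgeted matching `OPT = OPT⁺ ∪ OPT⁻` by
buck-per-bang relative to `γ_B`: under the budget constraint and a tight budget
`γ_B · u(M) = B` for the Threshold matching `M`, one has `u(OPT⁺) < u(M)`;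
combined with `u(M) ≥ u(OPT⁻)/2` this gives `u(OPT) ≤ 3·u(M)`. -/
theorem opt_split_bound (OPTp OPTm : Finset (L × R)) (hdisj : Disjoint OPTp OPTm)
    (u : L × R → ℝ) (c : L → ℝ) (x : L → ℝ)
    (hu : ∀ e ∈ OPTp ∪ OPTm, 0 < u e) (hc : ∀ ℓ : L, 0 ≤ c ℓ)
    (hx0 : ∀ ℓ : L, 0 ≤ x ℓ) (hx1 : ∀ ℓ : L, x ℓ ≤ 1)
    (B γB uM : ℝ) (hB : 0 < B) (hγ : 0 < γB)
    (hOPTp : ∀ e ∈ OPTp, c e.1 / u e > γB) (hOPTm : ∀ e ∈ OPTm, c e.1 / u e ≤ γB)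
    (hbudget : ∑ e ∈ OPTp ∪ OPTm, x e.1 * c e.1 ≤ B)
    (htight : γB * uM = B)
    (hgreedy : uM ≥ (∑ e ∈ OPTm, x e.1 * u e) / 2) :
    (∑ e ∈ OPTp, x e.1 * u e) < uM ∧
    (∑ e ∈ OPTp ∪ OPTm, x e.1 * u e) ≤ 3 * uM :=
  opt_split_bound_general OPTp OPTm hdisj u c x hu hc hx0 B γB uM hB hγ hOPTp hbudget htight hgreedy
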